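/- arXiv:1205.2994 — 3 statements merged into one kernel-verified Lean document; each statement's English description precedes it below -/
import Mathlib

section
/- Let H and K be subgroups of a countable group G, and let d be a left-invariant proper metric on G. Then for every g ∈ G and every U > 0, there exists a constant κ = κ(H, gK, U) such that N_U(H) ∩ N_U(gK) ⊆ N_κ(H ∩ gKg⁻¹), where N_U denotes the closed U-neighborhood with respect to d. -/
/-! If `x` is within `U + 1` of both `h ∈ H` and `gk ∈ gK`, then `h⁻¹gk` lies in the finite ball
of radius `2(U + 1)` about `1`. For each of the finitely many elements of that ball of the form
`h₀⁻¹gk₀`, fix one such `h₀`. Then `hh₀⁻¹ = gkk₀⁻¹g⁻¹ ∈ H ∩ gKg⁻¹`, and by left invariance it lies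
within `d(h₀, 1)` of `h`, a quantity bounded over the finitely many choices. -/

theorem Set.Finite.exists_bounded_witness {α β : Type*} {S : Set α} (hS : S.Finite)
    {P : α → β → Prop} (f : β → ℝ) (hP : ∀ a ∈ S, ∃ b, P a b) :
    ∃ C, ∀ a ∈ S, ∃ b, P a b ∧ f b ≤ C := by
  choose w hw using hP
  have : Finite S := hS
  obtain ⟨C, hC⟩ := (Set.finite_range fun a : S => f (w a a.2)).bddAbove
  exact ⟨C, fun a ha => ⟨w a ha, hw a ha, hC ⟨⟨a, ha⟩, rfl⟩⟩⟩

theorem mul_inv_mem_inter_conj {G : Type*} [Group G] {H K : Subgroup G} {g h h₀ k k₀ : G}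
    (hh : h ∈ H) (hh₀ : h₀ ∈ H) (hk : k ∈ K) (hk₀ : k₀ ∈ K)
    (heq : h₀⁻¹ * (g * k₀) = h⁻¹ * (g * k)) :
    h * h₀⁻¹ ∈ (H : Set G) ∩ (fun k => g * k * g⁻¹) '' (K : Set G) := by
  refine ⟨H.mul_mem hh (H.inv_mem hh₀), k * k₀⁻¹, K.mul_mem hk (K.inv_mem hk₀), ?_⟩
  calc g * (k * k₀⁻¹) * g⁻¹ = g * k * (g * k₀)⁻¹ := by group
    _ = h * h₀⁻¹ := by rw [mul_inv_eq_iff_eq_mul, mul_assoc, heq, mul_inv_cancel_left]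

theorem dist_inv_mul_one_of_left_invariant {G : Type*} [Group G] [PseudoMetricSpace G]
    (left_inv : ∀ g x y : G, dist (g * x) (g * y) = dist x y) (a b : G) :
    dist (a⁻¹ * b) 1 = dist b a := by
  simpa using (left_inv a (a⁻¹ * b) 1).symm

theorem neighborhoods_intersection_subset_general {G : Type*} [Group G]
    [MetricSpace G]
    (left_inv : ∀ g x y : G, dist (g * x) (g * y) = dist x y)
    (proper : ∀ r : ℝ, (Metric.closedBall (1 : G) r).Finite)
    (H K : Subgroup G) (g : G) (U : ℝ) :
    ∃ κ : ℝ, ∀ x : G,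
      Metric.infDist x (H : Set G) ≤ U →
      Metric.infDist x ((g * ·) '' (K : Set G)) ≤ U →
      Metric.infDist x ((H : Set G) ∩ ((fun k => g * k * g⁻¹) '' (K : Set G))) ≤ κ := by
  have dist_eq := dist_inv_mul_one_of_left_invariant left_inv
  obtain ⟨C, hC⟩ := Set.Finite.exists_bounded_witness
    (S := Metric.closedBall 1 (2 * (U + 1)) ∩ {s | ∃ h₀ ∈ H, ∃ k₀ ∈ K, h₀⁻¹ * (g * k₀) = s})
    (P := fun s h₀ => h₀ ∈ H ∧ ∃ k₀ ∈ K, h₀⁻¹ * (g * k₀) = s)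
    ((proper _).subset Set.inter_subset_left) (fun h₀ => dist h₀ 1) (fun s hs => hs.2)
  refine ⟨U + 1 + C, fun x hxH hxK => ?_⟩
  obtain ⟨h, hh, hxh⟩ := (Metric.infDist_lt_iff ⟨1, H.one_mem⟩).1 (hxH.trans_lt (lt_add_one U))
  obtain ⟨_, ⟨k, hk, rfl⟩, hxk⟩ :=
    (Metric.infDist_lt_iff (Set.Nonempty.image _ ⟨1, K.one_mem⟩)).1 (hxK.trans_lt (lt_add_one U))
  have hs : dist (h⁻¹ * (g * k)) 1 ≤ 2 * (U + 1) := by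
    rw [dist_eq]
    linarith [dist_triangle_left (g * k) h x]
  obtain ⟨h₀, ⟨hh₀, k₀, hk₀, heq⟩, hh₀C⟩ :=
    hC _ ⟨Metric.mem_closedBall.2 hs, h, hh, k, hk, rfl⟩
  have hdist : dist h (h * h₀⁻¹) = dist h₀ 1 := by
    rw [dist_comm, ← dist_eq h, inv_mul_cancel_left, ← mul_one h₀⁻¹, dist_eq, dist_comm]
  calc Metric.infDist x ((H : Set G) ∩ ((fun k => g * k * g⁻¹) '' (K : Set G)))
      ≤ dist x (h * h₀⁻¹) :=
        Metric.infDist_le_dist_of_mem (mul_inv_mem_inter_conj hh hh₀ hk hk₀ heq)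
    _ ≤ dist x h + dist h (h * h₀⁻¹) := dist_triangle _ _ _
    _ ≤ U + 1 + C := by linarith

/-- Hruska / Martinez-Pedroza: in a countable group with a left-invariant proper
metric, for subgroups `H, K`, any `g` and `U > 0`, there is `κ = κ(H, gK, U)` with
`N_U(H) ∩ N_U(gK) ⊆ N_κ(H ∩ gKg⁻¹)`. -/
theorem neighborhoods_intersection_subset {G : Type*} [Group G] [Countable G]
    [MetricSpace G]
    (left_inv : ∀ g x y : G, dist (g * x) (g * y) = dist x y)
    (proper : ∀ r : ℝ, (Metric.closedBall (1 : G) r).Finite)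
    (H K : Subgroup G) (g : G) (U : ℝ) (hU : 0 < U) :
    ∃ κ : ℝ, ∀ x : G,
      Metric.infDist x (H : Set G) ≤ U →
      Metric.infDist x ((g * ·) '' (K : Set G)) ≤ U →
      Metric.infDist x ((H : Set G) ∩ ((fun k => g * k * g⁻¹) '' (K : Set G))) ≤ κ :=
  neighborhoods_intersection_subset_general left_inv proper H K g U
end

section
/- Let G be a group in which every subgroup of the form ⟨Ḣ, K̇⟩ below is separable. Let H', K' ≤ G with finite-index subgroups Ḣ ≤ H', K̇ ≤ K' such that the subgroup L = ⟨Ḣ, K̇⟩ is separable in the profinite topology and H'K' ∩ H'LK' = H'K' with g ∉ H'LK' for a given g ∉ H'K'. Then, writing H' = ⋃ᵢ hᵢḢ and K' = ⋃ⱼ K̇kⱼ as finite unions of cosets, H'K' ⊆ H'LK' = ⋃_{i,j} hᵢ L kⱼ, and the latter is a closed set in the profinite topology not containing g; hence H'K' is contained in a closed set avoiding g. -/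
/-!
Separability is preserved by left translation, inversion and finite unions. Since `Ḣ ⊆ L` and
`Ḣ` has finite index in `H'`, the set `H'L` is the finite union of the translates `hᵢL` over
coset representatives `hᵢ` of `Ḣ` in `H'`; inverting reduces the right factor `K'` to the same
case. Hence `H'LK'` is separable, it contains `H'K'` because `1 ∈ L`, and it avoids `g`.
-/

/-- A subset `S` of a group `G` is separable if for every `g ∉ S` there is a
homomorphism `φ` from `G` to a finite group with `φ g ∉ φ '' S`; equivalently,
`S` is closed in the profinite topology on `G`. -/
def SepSet (G : Type*) [Group G] (S : Set G) : Prop :=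
  ∀ g ∉ S, ∃ (F : Type) (_ : Group F) (_ : Finite F) (φ : G →* F), φ g ∉ φ '' S

open scoped Pointwise

namespace SepSet

variable {G : Type*} [Group G]

lemma smul {S : Set G} (hS : SepSet G S) (a : G) : SepSet G (a • S) := by
  intro g hg
  obtain ⟨F, _, _, φ, hφ⟩ := hS (a⁻¹ * g) (by rwa [Set.mem_smul_set_iff_inv_smul_mem] at hg)
  refine ⟨F, _, ‹_›, φ, ?_⟩
  rintro ⟨_, ⟨s, hs, rfl⟩, hφs⟩
  exact hφ ⟨s, hs, by simp [← hφs]⟩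

lemma inv {S : Set G} (hS : SepSet G S) : SepSet G S⁻¹ := by
  intro g hg
  obtain ⟨F, _, _, φ, hφ⟩ := hS g⁻¹ hg
  refine ⟨F, _, ‹_›, φ, ?_⟩
  rintro ⟨s, hs, hφs⟩
  exact hφ ⟨s⁻¹, hs, by simp [hφs]⟩

lemma iUnion_of_fin {n : ℕ} {S : Fin n → Set G} (hS : ∀ i, SepSet G (S i)) :
    SepSet G (⋃ i, S i) := by
  intro g hg
  simp only [Set.mem_iUnion, not_exists] at hg
  choose F _ _ φ hφ using fun i => hS i g (hg i)
  refine ⟨∀ i, F i, inferInstance, inferInstance, MonoidHom.pi φ, ?_⟩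
  rintro ⟨x, hx, hφx⟩
  obtain ⟨i, hxi⟩ := Set.mem_iUnion.mp hx
  exact hφ i ⟨x, hxi, congrFun hφx i⟩

-- The finite group built for the union must live in `Type`, hence the reindexing by `Fin n`.
lemma iUnion {ι : Type*} [Finite ι] {S : ι → Set G} (hS : ∀ i, SepSet G (S i)) :
    SepSet G (⋃ i, S i) := by
  obtain ⟨n, ⟨e⟩⟩ := Finite.exists_equiv_fin ι
  rw [← e.symm.surjective.iUnion_comp]
  exact iUnion_of_fin fun i => hS _

lemma subgroup_mul {A H : Subgroup G} {S : Set G} (hS : SepSet G S) (hA : A.relIndex H ≠ 0)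
    (hAS : (A : Set G) * S ⊆ S) : SepSet G ((H : Set G) * S) := by
  have : (A.subgroupOf H).FiniteIndex := ⟨hA⟩
  suffices (H : Set G) * S = ⋃ q : H ⧸ A.subgroupOf H, (q.out : G) • S by
    rw [this]
    exact iUnion fun q => hS.smul _
  ext x
  simp only [Set.mem_iUnion]
  constructor
  · rintro ⟨h, hh, s, hs, rfl⟩
    obtain ⟨a, ha⟩ := QuotientGroup.mk_out_eq_mul (A.subgroupOf H) ⟨h, hh⟩
    refine ⟨QuotientGroup.mk ⟨h, hh⟩, Set.mem_smul_set_iff_inv_smul_mem.mpr (hAS ?_)⟩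
    refine ⟨(a : G)⁻¹, A.inv_mem a.2, s, hs, ?_⟩
    simp [ha, mul_assoc]
  · rintro ⟨q, s, hs, rfl⟩
    exact Set.mul_mem_mul q.out.2 hs

lemma mul_subgroup {A K : Subgroup G} {S : Set G} (hS : SepSet G S) (hA : A.relIndex K ≠ 0)
    (hSA : S * (A : Set G) ⊆ S) : SepSet G (S * (K : Set G)) := by
  have hAS : (A : Set G) * S⁻¹ ⊆ S⁻¹ := by
    rwa [← Set.inv_subset_inv, mul_inv_rev, inv_inv, inv_coe_set]
  simpa only [mul_inv_rev, inv_inv, inv_coe_set] using (hS.inv.subgroup_mul hA hAS).inv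

end SepSet

theorem doubleCoset_in_closed_set_general {G : Type*} [Group G]
    (H' K' Hd Kd L : Subgroup G)
    (hHfin : Hd.relIndex H' ≠ 0) (hKfin : Kd.relIndex K' ≠ 0)
    (hL : L = Hd ⊔ Kd) (hLsep : SepSet G (L : Set G))
    (g : G) (hg : g ∉ {x : G | ∃ h ∈ H', ∃ l ∈ L, ∃ k ∈ K', x = h * l * k}) :
    ∃ T : Set G, SepSet G T ∧
      {x : G | ∃ h ∈ H', ∃ k ∈ K', x = h * k} ⊆ T ∧ g ∉ T := by
  have hHdL : (Hd : Set G) * L ⊆ L := by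
    rintro _ ⟨a, ha, l, hl, rfl⟩
    exact L.mul_mem (hL ▸ Subgroup.mem_sup_left ha) hl
  have hLKd : (L : Set G) * Kd ⊆ L := by
    rintro _ ⟨l, hl, a, ha, rfl⟩
    exact L.mul_mem hl (hL ▸ Subgroup.mem_sup_right ha)
  refine ⟨(H' : Set G) * L * K', ?_, ?_, ?_⟩
  · refine (hLsep.subgroup_mul hHfin hHdL).mul_subgroup hKfin ?_
    rw [mul_assoc]
    exact Set.mul_subset_mul_left hLKd
  · rintro _ ⟨h, hh, k, hk, rfl⟩
    simpa using Set.mul_mem_mul (Set.mul_mem_mul hh L.one_mem) hk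
  · rintro ⟨_, ⟨h, hh, l, hl, rfl⟩, k, hk, rfl⟩
    exact hg ⟨h, hh, l, hl, k, hk, rfl⟩

/-- If `Ḣ ≤ H'` and `K̇ ≤ K'` have finite index, `L = ⟨Ḣ, K̇⟩` is separable and
`g ∉ H'LK'`, then `H'K'` is contained in a separable (closed) set avoiding `g`
(namely `H'LK'`, a finite union of translates `hᵢ L kⱼ`). -/
theorem doubleCoset_in_closed_set {G : Type*} [Group G]
    (H' K' Hd Kd L : Subgroup G)
    (hHd : Hd ≤ H') (hKd : Kd ≤ K')
    (hHfin : Hd.relIndex H' ≠ 0) (hKfin : Kd.relIndex K' ≠ 0)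
    (hL : L = Hd ⊔ Kd) (hLsep : SepSet G (L : Set G))
    (g : G) (hg : g ∉ {x : G | ∃ h ∈ H', ∃ l ∈ L, ∃ k ∈ K', x = h * l * k}) :
    ∃ T : Set G, SepSet G T ∧
      {x : G | ∃ h ∈ H', ∃ k ∈ K', x = h * k} ⊆ T ∧ g ∉ T :=
  doubleCoset_in_closed_set_general H' K' Hd Kd L hHfin hKfin hL hLsep g hg
end

section
/- Let Y be a geodesic metric space, X a (μ,ε)-contracting subset, and γ a geodesic. Suppose z is a point on γ with d(z, X) ≥ μ(1,0), and let p be the maximal connected subsegment of γ containing z with d(p, X) ≥ μ(1,0). If the endpoints of γ lie in N_U(X) for some U ≥ 0, then d(z, X) ≤ 3·max(U, μ(1,0)) + ε(1,0). -/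
/-! The far segment `[s₁, s₂]` starts and ends within `max(U, μ(1,0))` of `X`: either it reaches
an endpoint of `γ`, or, `d(·, X)` being 1-Lipschitz along `γ`, maximality forces `d(·, X) ≤ μ(1,0)`
there. Choosing almost-nearest points of `X` to the two ends, the triangle inequality and the
contracting property bound its length by `2 max(U, μ(1,0)) + ε(1,0)`, and a point of the segment
is at most half that length away from one of its ends. -/

/-- The closed `U`-neighborhood of a subset of a metric space. -/
def nbhd {Y : Type*} [MetricSpace Y] (U : ℝ) (X : Set Y) : Set Y :=
  {y | Metric.infDist y X ≤ U}

/-- The set of `δ`-almost-nearest points of `X` to `y`. -/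
def projSet {Y : Type*} [MetricSpace Y] (δ : ℝ) (X : Set Y) (y : Y) : Set Y :=
  {x ∈ X | dist y x ≤ Metric.infDist y X + δ}

/-- The projection of a subset `A` to `X`. -/
def projSetOn {Y : Type*} [MetricSpace Y] (δ : ℝ) (X A : Set Y) : Set Y :=
  ⋃ a ∈ A, projSet δ X a

/-- A `(λ, c)`-quasigeodesic, parameterized by arclength on `[a, b]`. -/
def IsQGeodesicOn {Y : Type*} [MetricSpace Y] (lam c : ℝ) (f : ℝ → Y) (a b : ℝ) : Prop :=
  a ≤ b ∧ ∀ s ∈ Set.Icc a b, ∀ t ∈ Set.Icc a b,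
    dist (f s) (f t) ≤ |s - t| ∧ |s - t| ≤ lam * dist (f s) (f t) + c

/-- A geodesic parameterized by arclength on `[a, b]`. -/
def IsGeodesicOn {Y : Type*} [MetricSpace Y] (f : ℝ → Y) (a b : ℝ) : Prop :=
  a ≤ b ∧ ∀ s ∈ Set.Icc a b, ∀ t ∈ Set.Icc a b, dist (f s) (f t) = |s - t|

/-- A preferred class of (parameterized) paths. -/
abbrev PathClass (Y : Type*) := (ℝ → Y) → ℝ → ℝ → Prop

/-- The class `𝓛` contains all geodesics. -/
def ContainsGeodesics {Y : Type*} [MetricSpace Y] (𝓛 : PathClass Y) : Prop :=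
  ∀ f a b, IsGeodesicOn f a b → 𝓛 f a b

/-- `X` is `(μ, ε)`-contracting with respect to the class `𝓛`: any
`(λ, c)`-quasigeodesic of `𝓛` at distance at least `μ(λ,c)` from `X` has
projection to `X` of diameter less than `ε(λ,c)`. -/
def Contracting {Y : Type*} [MetricSpace Y] (δ : ℝ) (μ ε : ℝ → ℝ → ℝ)
    (𝓛 : PathClass Y) (X : Set Y) : Prop :=
  ∀ lam c f a b, 1 ≤ lam → 0 ≤ c → 𝓛 f a b → IsQGeodesicOn lam c f a b →
    (∀ s ∈ Set.Icc a b, μ lam c ≤ Metric.infDist (f s) X) →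
    Metric.diam (projSetOn δ X (f '' Set.Icc a b)) < ε lam c

open Set Metric

section Projection

variable {Y : Type*} [MetricSpace Y] {δ : ℝ} {X A : Set Y}

theorem exists_mem_projSet_dist_lt (hX : X.Nonempty) {η : ℝ} (hη : 0 < η) (hηδ : η ≤ δ) (y : Y) :
    ∃ x ∈ projSet δ X y, dist y x < infDist y X + η := by
  obtain ⟨x, hxX, hx⟩ := (infDist_lt_iff hX).1 (lt_add_of_pos_right (infDist y X) hη)
  exact ⟨x, ⟨hxX, by linarith⟩, hx⟩

theorem isBounded_projSetOn (hA : Bornology.IsBounded A) :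
    Bornology.IsBounded (projSetOn δ X A) := by
  rcases A.eq_empty_or_nonempty with rfl | ⟨a₀, -⟩
  · simp [projSetOn]
  obtain ⟨r, hr⟩ := (isBounded_iff_subset_closedBall a₀).1 hA
  refine (isBounded_closedBall (x := a₀) (r := infDist a₀ X + 2 * r + δ)).subset ?_
  simp only [projSetOn, iUnion_subset_iff]
  rintro a ha x ⟨-, hx⟩
  have har : dist a a₀ ≤ r := hr ha
  rw [mem_closedBall]
  calc dist x a₀ ≤ dist a x + dist a a₀ := dist_triangle_left _ _ _
    _ ≤ infDist a X + δ + r := by gcongr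
    _ ≤ infDist a₀ X + dist a a₀ + δ + r := by gcongr; exact infDist_le_infDist_add_dist
    _ ≤ infDist a₀ X + 2 * r + δ := by linarith

theorem dist_le_infDist_add_infDist_add_diam_projSetOn (hX : X.Nonempty) (hδ : 0 < δ)
    (hA : Bornology.IsBounded A) {y y' : Y} (hy : y ∈ A) (hy' : y' ∈ A) :
    dist y y' ≤ infDist y X + infDist y' X + diam (projSetOn δ X A) := by
  refine le_of_forall_pos_le_add fun c hc => ?_
  have hη : 0 < min (c / 2) δ := lt_min (half_pos hc) hδ
  obtain ⟨x, hx, hyx⟩ := exists_mem_projSet_dist_lt hX hη (min_le_right _ _) y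
  obtain ⟨x', hx', hyx'⟩ := exists_mem_projSet_dist_lt hX hη (min_le_right _ _) y'
  have hxx' : dist x x' ≤ diam (projSetOn δ X A) :=
    dist_le_diam_of_mem (isBounded_projSetOn hA) (mem_biUnion hy hx) (mem_biUnion hy' hx')
  have := min_le_left (c / 2) δ
  calc dist y y' ≤ dist y x + dist x x' + dist y' x' := by
        simpa only [dist_comm x' y'] using dist_triangle4 y x x' y'
    _ ≤ infDist y X + infDist y' X + diam (projSetOn δ X A) + c := by linarith

end Projection

section Geodesic

variable {Y : Type*} [MetricSpace Y] {f : ℝ → Y} {a b : ℝ}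

theorem IsGeodesicOn.mono (hf : IsGeodesicOn f a b) {a' b' : ℝ} (hab' : a' ≤ b')
    (hsub : Icc a' b' ⊆ Icc a b) : IsGeodesicOn f a' b' :=
  ⟨hab', fun s hs t ht => hf.2 s (hsub hs) t (hsub ht)⟩

theorem IsGeodesicOn.isQGeodesicOn (hf : IsGeodesicOn f a b) : IsQGeodesicOn 1 0 f a b :=
  ⟨hf.1, fun s hs t ht => by simp [hf.2 s hs t ht]⟩

theorem IsGeodesicOn.lipschitzOnWith (hf : IsGeodesicOn f a b) : LipschitzOnWith 1 f (Icc a b) :=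
  LipschitzOnWith.mk_one fun s hs t ht => by rw [hf.2 s hs t ht, Real.dist_eq]

theorem IsGeodesicOn.dist_left_right (hf : IsGeodesicOn f a b) : dist (f a) (f b) = b - a := by
  rw [hf.2 a (left_mem_Icc.2 hf.1) b (right_mem_Icc.2 hf.1), abs_sub_comm, abs_of_nonneg]
  linarith [hf.1]

theorem Contracting.diam_projSetOn_lt_of_isGeodesicOn {δ : ℝ} {μ ε : ℝ → ℝ → ℝ}
    {𝓛 : PathClass Y} {X : Set Y} (hX : Contracting δ μ ε 𝓛 X) (h𝓛 : ContainsGeodesics 𝓛)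
    (hf : IsGeodesicOn f a b) (hfar : ∀ s ∈ Icc a b, μ 1 0 ≤ infDist (f s) X) :
    diam (projSetOn δ X (f '' Icc a b)) < ε 1 0 :=
  hX 1 0 f a b le_rfl le_rfl (h𝓛 f a b hf) hf.isQGeodesicOn hfar

theorem IsGeodesicOn.sub_le_infDist_add_infDist_add_diam {δ : ℝ} {X : Set Y}
    (hf : IsGeodesicOn f a b) (hX : X.Nonempty) (hδ : 0 < δ) :
    b - a ≤ infDist (f a) X + infDist (f b) X + diam (projSetOn δ X (f '' Icc a b)) := by
  rw [← hf.dist_left_right]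
  exact dist_le_infDist_add_infDist_add_diam_projSetOn hX hδ
    (isCompact_Icc.image_of_continuousOn hf.lipschitzOnWith.continuousOn).isBounded
    (mem_image_of_mem f (left_mem_Icc.2 hf.1)) (mem_image_of_mem f (right_mem_Icc.2 hf.1))

end Geodesic

section MaximalSegment

variable {φ : ℝ → ℝ} {a b m s₁ s₂ : ℝ}

theorem LipschitzOnWith.le_of_abs_sub_le {s : Set ℝ} (hφ : LipschitzOnWith 1 φ s) {x y : ℝ}
    (hx : x ∈ s) (hy : y ∈ s) (h : |x - y| ≤ φ y - m) : m ≤ φ x := by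
  have := hφ.le_add_mul hy hx
  rw [NNReal.coe_one, one_mul, Real.dist_eq, abs_sub_comm] at this
  linarith

theorem eq_left_or_le_of_maximal (hφ : LipschitzOnWith 1 φ (Icc a b))
    (hsub : Icc s₁ s₂ ⊆ Icc a b) (h₁₂ : s₁ ≤ s₂) (hfar : ∀ s ∈ Icc s₁ s₂, m ≤ φ s)
    (hmax : ∀ s₁' s₂', s₁' ≤ s₁ → s₂ ≤ s₂' → Icc s₁' s₂' ⊆ Icc a b →
      (∀ s ∈ Icc s₁' s₂', m ≤ φ s) → s₁' = s₁ ∧ s₂' = s₂) :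
    s₁ = a ∨ φ s₁ ≤ m := by
  by_contra! h
  obtain ⟨ha, hm⟩ := h
  have hs₁ : s₁ ∈ Icc a b := hsub (left_mem_Icc.2 h₁₂)
  set η := min (s₁ - a) (φ s₁ - m)
  have hη : 0 < η := lt_min (sub_pos.2 (lt_of_le_of_ne hs₁.1 (Ne.symm ha))) (sub_pos.2 hm)
  have hsub' : Icc (s₁ - η) s₂ ⊆ Icc a b := fun s hs =>
    ⟨by linarith [hs.1, min_le_left (s₁ - a) (φ s₁ - m)], hs.2.trans (hsub (right_mem_Icc.2 h₁₂)).2⟩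
  have hfar' : ∀ s ∈ Icc (s₁ - η) s₂, m ≤ φ s := by
    intro s hs
    rcases le_total s₁ s with h | h
    · exact hfar s ⟨h, hs.2⟩
    · refine hφ.le_of_abs_sub_le (hsub' hs) hs₁ ?_
      rw [abs_of_nonpos (by linarith)]
      linarith [hs.1, min_le_right (s₁ - a) (φ s₁ - m)]
  linarith [(hmax (s₁ - η) s₂ (by linarith) le_rfl hsub' hfar').1]

theorem eq_right_or_le_of_maximal (hφ : LipschitzOnWith 1 φ (Icc a b))
    (hsub : Icc s₁ s₂ ⊆ Icc a b) (h₁₂ : s₁ ≤ s₂) (hfar : ∀ s ∈ Icc s₁ s₂, m ≤ φ s)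
    (hmax : ∀ s₁' s₂', s₁' ≤ s₁ → s₂ ≤ s₂' → Icc s₁' s₂' ⊆ Icc a b →
      (∀ s ∈ Icc s₁' s₂', m ≤ φ s) → s₁' = s₁ ∧ s₂' = s₂) :
    s₂ = b ∨ φ s₂ ≤ m := by
  by_contra! h
  obtain ⟨hb, hm⟩ := h
  have hs₂ : s₂ ∈ Icc a b := hsub (right_mem_Icc.2 h₁₂)
  set η := min (b - s₂) (φ s₂ - m)
  have hη : 0 < η := lt_min (sub_pos.2 (lt_of_le_of_ne hs₂.2 hb)) (sub_pos.2 hm)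
  have hsub' : Icc s₁ (s₂ + η) ⊆ Icc a b := fun s hs =>
    ⟨(hsub (left_mem_Icc.2 h₁₂)).1.trans hs.1, by linarith [hs.2, min_le_left (b - s₂) (φ s₂ - m)]⟩
  have hfar' : ∀ s ∈ Icc s₁ (s₂ + η), m ≤ φ s := by
    intro s hs
    rcases le_total s s₂ with h | h
    · exact hfar s ⟨hs.1, h⟩
    · refine hφ.le_of_abs_sub_le (hsub' hs) hs₂ ?_
      rw [abs_of_nonneg (by linarith)]
      linarith [hs.2, min_le_right (b - s₂) (φ s₂ - m)]
  linarith [(hmax s₁ (s₂ + η) le_rfl (by linarith) hsub' hfar').2]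

theorem LipschitzOnWith.le_add_half_of_le_of_le (hφ : LipschitzOnWith 1 φ (Icc s₁ s₂)) {K t : ℝ}
    (ht : t ∈ Icc s₁ s₂) (h₁ : φ s₁ ≤ K) (h₂ : φ s₂ ≤ K) : φ t ≤ K + (s₂ - s₁) / 2 := by
  have hl := hφ.le_add_mul ht (left_mem_Icc.2 (ht.1.trans ht.2))
  have hr := hφ.le_add_mul ht (right_mem_Icc.2 (ht.1.trans ht.2))
  rw [NNReal.coe_one, one_mul, Real.dist_eq] at hl hr
  rw [abs_of_nonneg (sub_nonneg.2 ht.1)] at hl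
  rw [abs_of_nonpos (sub_nonpos.2 ht.2)] at hr
  rcases le_total (t - s₁) (s₂ - t) with h | h <;> linarith

end MaximalSegment

theorem dist_le_of_maximal_far_segment_general {Y : Type*} [MetricSpace Y]
    (δ : ℝ) (hδ : 0 < δ) (μ ε : ℝ → ℝ → ℝ) (𝓛 : PathClass Y)
    (hgeo : ContainsGeodesics 𝓛) (X : Set Y) (hX : Contracting δ μ ε 𝓛 X)
    (f : ℝ → Y) (a b : ℝ) (hf : IsGeodesicOn f a b)
    (U : ℝ) (ha : f a ∈ nbhd U X) (hb : f b ∈ nbhd U X)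
    (t₀ : ℝ)
    (s₁ s₂ : ℝ) (hsub : Set.Icc s₁ s₂ ⊆ Set.Icc a b) (ht₀mem : t₀ ∈ Set.Icc s₁ s₂)
    (hfar : ∀ s ∈ Set.Icc s₁ s₂, μ 1 0 ≤ Metric.infDist (f s) X)
    (hmax : ∀ s₁' s₂', s₁' ≤ s₁ → s₂ ≤ s₂' → Set.Icc s₁' s₂' ⊆ Set.Icc a b →
      (∀ s ∈ Set.Icc s₁' s₂', μ 1 0 ≤ Metric.infDist (f s) X) → s₁' = s₁ ∧ s₂' = s₂) :
    Metric.infDist (f t₀) X ≤ 3 * max U (μ 1 0) + ε 1 0 := by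
  set K := max U (μ 1 0)
  have h₁₂ : s₁ ≤ s₂ := ht₀mem.1.trans ht₀mem.2
  have hφ : LipschitzOnWith 1 (fun s => infDist (f s) X) (Icc a b) := by
    simpa [Function.comp_def] using (lipschitz_infDist_pt X).comp_lipschitzOnWith hf.lipschitzOnWith
  have hend₁ : infDist (f s₁) X ≤ K := by
    rcases eq_left_or_le_of_maximal hφ hsub h₁₂ hfar hmax with rfl | h
    exacts [ha.trans (le_max_left _ _), h.trans (le_max_right _ _)]
  have hend₂ : infDist (f s₂) X ≤ K := by
    rcases eq_right_or_le_of_maximal hφ hsub h₁₂ hfar hmax with rfl | h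
    exacts [hb.trans (le_max_left _ _), h.trans (le_max_right _ _)]
  have hseg : IsGeodesicOn f s₁ s₂ := hf.mono h₁₂ hsub
  have hdiam := hX.diam_projSetOn_lt_of_isGeodesicOn hgeo hseg hfar
  have hK : 0 ≤ K := infDist_nonneg.trans hend₁
  have hε : 0 < ε 1 0 := diam_nonneg.trans_lt hdiam
  rcases X.eq_empty_or_nonempty with rfl | hXne
  · rw [infDist_empty]; linarith
  have hlen := hseg.sub_le_infDist_add_infDist_add_diam hXne hδ
  have hmid := (hφ.mono hsub).le_add_half_of_le_of_le ht₀mem hend₁ hend₂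
  linarith

/-- If `γ` is a geodesic with endpoints in `N_U(X)` for a `(μ,ε)`-contracting set `X`,
`z = f t₀` is a point of `γ` with `d(z, X) ≥ μ(1,0)`, and `[s₁, s₂]` is the maximal
subsegment of `γ` containing `t₀` staying at distance `≥ μ(1,0)` from `X`, then
`d(z, X) ≤ 3 max(U, μ(1,0)) + ε(1,0)`. -/
theorem dist_le_of_maximal_far_segment {Y : Type*} [MetricSpace Y]
    (δ : ℝ) (hδ : 0 < δ) (μ ε : ℝ → ℝ → ℝ) (𝓛 : PathClass Y)
    (hgeo : ContainsGeodesics 𝓛) (X : Set Y) (hX : Contracting δ μ ε 𝓛 X)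
    (f : ℝ → Y) (a b : ℝ) (hf : IsGeodesicOn f a b)
    (U : ℝ) (hU : 0 ≤ U) (ha : f a ∈ nbhd U X) (hb : f b ∈ nbhd U X)
    (t₀ : ℝ) (ht₀ : t₀ ∈ Set.Icc a b) (hz : μ 1 0 ≤ Metric.infDist (f t₀) X)
    (s₁ s₂ : ℝ) (hsub : Set.Icc s₁ s₂ ⊆ Set.Icc a b) (ht₀mem : t₀ ∈ Set.Icc s₁ s₂)
    (hfar : ∀ s ∈ Set.Icc s₁ s₂, μ 1 0 ≤ Metric.infDist (f s) X)
    (hmax : ∀ s₁' s₂', s₁' ≤ s₁ → s₂ ≤ s₂' → Set.Icc s₁' s₂' ⊆ Set.Icc a b →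
      (∀ s ∈ Set.Icc s₁' s₂', μ 1 0 ≤ Metric.infDist (f s) X) → s₁' = s₁ ∧ s₂' = s₂) :
    Metric.infDist (f t₀) X ≤ 3 * max U (μ 1 0) + ε 1 0 :=
  dist_le_of_maximal_far_segment_general δ hδ μ ε 𝓛 hgeo X hX f a b hf U ha hb t₀ s₁ s₂ hsub ht₀mem
    hfar hmax
end
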